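/- For the Farey transfer operator, if f is bounded and supported on Y_n = [1/(n+2), 1/(n+1)) (n ≥ 1), then the sup norm of T̂_1^n(f) restricted to Y = [1/2,1] is at most (2/(n+2))·‖f‖_∞. Explicitly, T̂_1^n(1_{Y_n}·f)(x) = (∏_{k=0}^{n-1} (1+kx)/(1+(k+1)x)) · f(x/(1+nx)) and ∏_{k=0}^{n-1} (1+k/2)/(1+(k+1)/2) = 2/(n+2). -/
import Mathlib


/-- The transfer operator of the Farey map with respect to the measure with density `1/x`:
`T̂₁(f)(x) = f_{1,0}(x)·f(f_{1,1}(x)) + f_{1,1}(x)·f(f_{1,0}(x))`. -/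
noncomputable def That (f : ℝ → ℝ) (x : ℝ) : ℝ :=
  (x / (1 + x)) * f (1 / (1 + x)) + (1 / (1 + x)) * f (x / (1 + x))

/-- `Y n = [1/(n+2), 1/(n+1))` for `n ≥ 1`. -/
noncomputable def Yn (n : ℕ) : Set ℝ := Set.Ico (1 / ((n : ℝ) + 2)) (1 / ((n : ℝ) + 1))

private lemma prod_telescope (x : ℝ) (hx : 0 ≤ x) (m : ℕ) :
    ∏ k ∈ Finset.range m, (1 + (k : ℝ) * x) / (1 + ((k : ℝ) + 1) * x) = 1 / (1 + m * x) := by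
  induction m with
  | zero => simp
  | succ m ih =>
    rw [Finset.prod_range_succ, ih]
    have h1 : (0:ℝ) < 1 + m * x := by positivity
    have h2 : (0:ℝ) < 1 + ((m:ℝ) + 1) * x := by positivity
    push_cast
    field_simp

private lemma key13 (n : ℕ) (hn : 1 ≤ n) (f : ℝ → ℝ) :
    ∀ m, m ≤ n → ∀ x ∈ Set.Icc (0:ℝ) 1,
      That^[m] ((Yn n).indicator f) x
        = (1 / (1 + m * x)) * (Yn n).indicator f (x / (1 + m * x)) := by
  intro m
  induction m with
  | zero => intro _ x _; simp
  | succ m ih =>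
    intro hm x hx
    obtain ⟨hx0, hx1⟩ := hx
    have hm' : m ≤ n := Nat.le_of_succ_le hm
    have h1x : (0:ℝ) < 1 + x := by linarith
    rw [Function.iterate_succ_apply', That]
    have ha : (1 : ℝ) / (1 + x) ∈ Set.Icc (0:ℝ) 1 := by
      constructor
      · positivity
      · rw [div_le_one h1x]; linarith
    have hb : x / (1 + x) ∈ Set.Icc (0:ℝ) 1 := by
      constructor
      · positivity
      · rw [div_le_one h1x]; linarith
    rw [ih hm' _ ha, ih hm' _ hb]
    have hDpos : (0:ℝ) < 1 + m * (1 / (1 + x)) := by positivity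
    have e1 : (1:ℝ) / (1 + x) / (1 + (m:ℝ) * (1 / (1 + x))) = 1 / (1 + x + m) := by
      rw [div_div]
      congr 1
      field_simp
    have hz : (Yn n).indicator f (1 / (1 + x + (m:ℝ))) = 0 := by
      apply Set.indicator_of_notMem
      rintro ⟨_, h2⟩
      rw [div_lt_div_iff₀ (by positivity) (by positivity)] at h2
      have hmn : (m:ℝ) + 1 ≤ n := by exact_mod_cast hm
      linarith
    rw [e1, hz, mul_zero, mul_zero, zero_add]
    have hEpos : (0:ℝ) < 1 + m * (x / (1 + x)) := by positivity
    have hFpos : (0:ℝ) < 1 + ((m:ℝ) + 1) * x := by positivity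
    have e2 : x / (1 + x) / (1 + (m:ℝ) * (x / (1 + x))) = x / (1 + ((m:ℝ) + 1) * x) := by
      rw [div_div]
      congr 1
      field_simp
      ring
    have c2 : (1 / (1 + x)) * (1 / (1 + (m:ℝ) * (x / (1 + x)))) = 1 / (1 + ((m:ℝ) + 1) * x) := by
      rw [div_mul_div_comm, one_mul]
      congr 1
      field_simp
      ring
    rw [e2, ← mul_assoc, c2]
    push_cast
    ring_nf

theorem stmt_13 (n : ℕ) (hn : 1 ≤ n) (f : ℝ → ℝ) (C : ℝ) (hf : ∀ y : ℝ, |f y| ≤ C) :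
    (∀ x ∈ Set.Icc (1/2 : ℝ) 1,
      That^[n] ((Yn n).indicator f) x
        = (∏ k ∈ Finset.range n, (1 + k * x) / (1 + (k + 1) * x))
            * (Yn n).indicator f (x / (1 + n * x))) ∧
    (∏ k ∈ Finset.range n, (1 + (k : ℝ) / 2) / (1 + ((k : ℝ) + 1) / 2) = 2 / ((n : ℝ) + 2)) ∧
    (∀ x ∈ Set.Icc (1/2 : ℝ) 1,
      |That^[n] ((Yn n).indicator f) x| ≤ (2 / ((n : ℝ) + 2)) * C) := by
  have hC : 0 ≤ C := le_trans (abs_nonneg _) (hf 0)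
  have hind : ∀ z, |(Yn n).indicator f z| ≤ C := by
    intro z
    by_cases hz : z ∈ Yn n
    · rw [Set.indicator_of_mem hz]; exact hf z
    · rw [Set.indicator_of_notMem hz]; simpa using hC
  refine ⟨?_, ?_, ?_⟩
  · intro x hx
    have hx0 : (0:ℝ) ≤ x := by linarith [hx.1]
    rw [key13 n hn f n le_rfl x ⟨hx0, hx.2⟩, prod_telescope x hx0]
  · have h := prod_telescope (1/2) (by norm_num) n
    calc ∏ k ∈ Finset.range n, (1 + (k : ℝ) / 2) / (1 + ((k : ℝ) + 1) / 2)
        = ∏ k ∈ Finset.range n, (1 + (k : ℝ) * (1/2)) / (1 + ((k : ℝ) + 1) * (1/2)) := by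
          apply Finset.prod_congr rfl; intro k _; ring_nf
      _ = 1 / (1 + n * (1/2 : ℝ)) := h
      _ = 2 / ((n : ℝ) + 2) := by
          rw [div_eq_div_iff (by positivity) (by positivity)]; ring
  · intro x hx
    have hx0 : (0:ℝ) ≤ x := by linarith [hx.1]
    rw [key13 n hn f n le_rfl x ⟨hx0, hx.2⟩]
    have hpos : (0:ℝ) < 1 + n * x := by positivity
    rw [abs_mul, abs_of_pos (by positivity : (0:ℝ) < 1 / (1 + (n:ℝ) * x))]
    apply mul_le_mul _ (hind _) (abs_nonneg _) (by positivity)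
    rw [div_le_div_iff₀ hpos (by positivity)]
    nlinarith [hx.1, Nat.cast_nonneg (α := ℝ) n]
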